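/- arXiv:2106.07493 — 2 statements merged into one kernel-verified Lean document; each statement's English description precedes it below -/
import Mathlib

section
/- Let h > 0, ε > 0, K ≥ 0, and let f : ℝ → ℝ be nondecreasing. Assume that limsup_{t→∞} e^{−ht} (f(t+ε) − f(t−ε)) ≤ 2εK. Then limsup_{t→∞} h e^{−ht} f(t) ≤ e^{4hε} K. -/
open Filter Real Topology

/-!
If every window increment satisfies `f s - f (s - 2ε) ≤ c e^{h(s-ε)}`, then with
`M = c / (2 sinh (hε))` the function `f - M e^{h·}` does not increase along steps of length `2ε`,
since `M (e^{hs} - e^{h(s-2ε)}) = c e^{h(s-ε)}`. Hence `f s ≤ O(1) + M e^{hs}` and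
`limsup h e^{-hs} f s ≤ h c / (2 sinh (hε)) ≤ c / (2ε)`; letting `c ↓ 2εK` gives the bound
`K ≤ e^{4hε} K`.
-/

lemma le_of_le_sub_of_le_on_Ico {φ : ℝ → ℝ} {S d B : ℝ} (hd : 0 < d)
    (hstep : ∀ s, S + d ≤ s → φ s ≤ φ (s - d))
    (hbase : ∀ s ∈ Set.Ico S (S + d), φ s ≤ B) :
    ∀ s, S ≤ s → φ s ≤ B := by
  have hIco : ∀ n : ℕ, ∀ s ∈ Set.Ico S (S + (n + 1) * d), φ s ≤ B := by
    intro n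
    induction n with
    | zero => simpa using hbase
    | succ n ih =>
      rintro s ⟨hSs, hs⟩
      by_cases hsd : S + d ≤ s
      · refine (hstep s hsd).trans (ih _ ⟨by linarith, ?_⟩)
        push_cast at hs
        linarith
      · exact hbase s ⟨hSs, by linarith⟩
  intro s hs
  obtain ⟨n, hn⟩ := exists_nat_gt ((s - S) / d)
  refine hIco n s ⟨hs, ?_⟩
  rw [div_lt_iff₀ hd] at hn
  linarith

lemma exp_sub_exp_sub_two_mul (h s ε : ℝ) :
    exp (h * s) - exp (h * (s - 2 * ε)) = 2 * sinh (h * ε) * exp (h * (s - ε)) := by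
  rw [sinh_eq, show h * s = h * ε + h * (s - ε) by ring,
    show h * (s - 2 * ε) = -(h * ε) + h * (s - ε) by ring, exp_add, exp_add]
  ring

lemma tendsto_exp_neg_mul_atTop_nhds_zero {h : ℝ} (hh : 0 < h) :
    Tendsto (fun t => exp (-h * t)) atTop (𝓝 0) :=
  tendsto_exp_comp_nhds_zero.2 (tendsto_id.const_mul_atTop_of_neg (neg_neg_of_pos hh))

section Monotone

variable {f : ℝ → ℝ} {h : ℝ}

lemma Monotone.isBoundedUnder_ge_mul_exp_neg_mul (hf : Monotone f) (hh : 0 < h) {C : ℝ}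
    (hC : 0 ≤ C) : IsBoundedUnder (· ≥ ·) atTop (fun t => C * exp (-h * t) * f t) := by
  have hlim : Tendsto (fun t => C * exp (-h * t) * f 0) atTop (𝓝 0) := by
    simpa using ((tendsto_exp_neg_mul_atTop_nhds_zero hh).const_mul C).mul_const (f 0)
  refine hlim.isBoundedUnder_ge.mono_ge ?_
  filter_upwards [eventually_ge_atTop 0] with t ht
  exact mul_le_mul_of_nonneg_left (hf ht) (by positivity)

variable {ε c : ℝ}

lemma Monotone.isBoundedUnder_le_window_of_isBoundedUnder_le (hf : Monotone f) (hh : 0 < h)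
    (hg : IsBoundedUnder (· ≤ ·) atTop (fun t => h * exp (-h * t) * f t)) :
    IsBoundedUnder (· ≤ ·) atTop (fun t => exp (-h * t) * (f (t + ε) - f (t - ε))) := by
  obtain ⟨a, ha⟩ := hg
  obtain ⟨b, hb⟩ := hf.isBoundedUnder_ge_mul_exp_neg_mul hh zero_le_one
  rw [eventually_map] at ha hb
  refine ⟨exp (h * ε) / h * a - exp (-(h * ε)) * b, eventually_map.2 ?_⟩
  filter_upwards [(tendsto_atTop_add_const_right _ ε tendsto_id).eventually ha,
    (tendsto_atTop_add_const_right _ (-ε) tendsto_id).eventually hb] with t hfwd hback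
  simp only [id, one_mul, ← sub_eq_add_neg] at hfwd hback
  have hsplit : exp (-h * t) * (f (t + ε) - f (t - ε)) =
      exp (h * ε) / h * (h * exp (-h * (t + ε)) * f (t + ε))
        - exp (-(h * ε)) * (exp (-h * (t - ε)) * f (t - ε)) := by
    have hfwd_exp : exp (-h * t) = exp (h * ε) * exp (-h * (t + ε)) := by
      rw [← exp_add]; ring_nf
    have hback_exp : exp (-h * t) = exp (-(h * ε)) * exp (-h * (t - ε)) := by
      rw [← exp_add]; ring_nf
    rw [mul_assoc h, ← mul_assoc (exp (h * ε) / h), div_mul_cancel₀ _ hh.ne']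
    linear_combination f (t + ε) * hfwd_exp - f (t - ε) * hback_exp
  rw [hsplit]
  gcongr

lemma Monotone.exists_le_add_mul_exp_of_window_le (hf : Monotone f) (hh : 0 < h) (hε : 0 < ε)
    (hc : 0 ≤ c) (hwin : ∀ᶠ t in atTop, f (t + ε) - f (t - ε) ≤ c * exp (h * t)) :
    ∃ a, ∀ᶠ s in atTop, f s ≤ a + c / (2 * sinh (h * ε)) * exp (h * s) := by
  obtain ⟨T, hT⟩ := eventually_atTop.1 hwin
  set M := c / (2 * sinh (h * ε))
  have hsinh : 0 < sinh (h * ε) := sinh_pos_iff.2 (by positivity)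
  have hM : 0 ≤ M := by positivity
  refine ⟨f (T + 3 * ε), ?_⟩
  filter_upwards [eventually_ge_atTop (T + ε)] with s hs
  suffices f s - M * exp (h * s) ≤ f (T + 3 * ε) by linarith
  refine le_of_le_sub_of_le_on_Ico (φ := fun s => f s - M * exp (h * s))
    (S := T + ε) (d := 2 * ε) (by positivity)
    (fun s hs => ?_) (fun s hs => ?_) s hs
  · have hstep := hT (s - ε) (by linarith)
    rw [sub_add_cancel, sub_sub, ← two_mul] at hstep
    have hMc : M * (2 * sinh (h * ε)) = c := div_mul_cancel₀ _ (by positivity)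
    linear_combination hstep - M * exp_sub_exp_sub_two_mul h s ε - exp (h * (s - ε)) * hMc
  · have : f s ≤ f (T + 3 * ε) := hf (by linarith [hs.2])
    have : 0 ≤ M * exp (h * s) := by positivity
    linarith

lemma Monotone.limsup_le_of_window_le (hf : Monotone f) (hh : 0 < h) (hε : 0 < ε) (hc : 0 ≤ c)
    (hwin : ∀ᶠ t in atTop, f (t + ε) - f (t - ε) ≤ c * exp (h * t)) :
    limsup (fun t => h * exp (-h * t) * f t) atTop ≤ c / (2 * ε) := by
  obtain ⟨a, ha⟩ := hf.exists_le_add_mul_exp_of_window_le hh hε hc hwin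
  set M := c / (2 * sinh (h * ε))
  have hlim : Tendsto (fun t => h * exp (-h * t) * a + h * M) atTop (𝓝 (h * M)) := by
    simpa using
      (((tendsto_exp_neg_mul_atTop_nhds_zero hh).const_mul h).mul_const a).add_const (h * M)
  have hle :
      (fun t => h * exp (-h * t) * f t) ≤ᶠ[atTop] fun t => h * exp (-h * t) * a + h * M := by
    filter_upwards [ha] with t ht
    calc h * exp (-h * t) * f t ≤ h * exp (-h * t) * (a + M * exp (h * t)) := by gcongr
      _ = h * exp (-h * t) * a + h * M := by
        have hexp : exp (-h * t) * exp (h * t) = 1 := by rw [← exp_add]; simp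
        linear_combination (h * M) * hexp
  have hsinh : h * ε ≤ sinh (h * ε) := self_le_sinh_iff.2 (by positivity)
  calc limsup (fun t => h * exp (-h * t) * f t) atTop
      ≤ limsup (fun t => h * exp (-h * t) * a + h * M) atTop :=
        limsup_le_limsup hle (hf.isBoundedUnder_ge_mul_exp_neg_mul hh hh.le).isCoboundedUnder_le
          hlim.isBoundedUnder_le
    _ = h * M := hlim.limsup_eq
    _ ≤ c / (2 * ε) := by
      rw [mul_div_assoc', div_le_div_iff₀ (by positivity) (by positivity)]
      nlinarith

end Monotone

/-- If `f : ℝ → ℝ` is nondecreasing and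
`limsup_{t→∞} e^{-h t} (f (t+ε) - f (t-ε)) ≤ 2 ε K`, then
`limsup_{t→∞} h e^{-h t} f t ≤ e^{4 h ε} K`. -/
theorem limsup_of_window_upper_bound
    (h ε K : ℝ) (hh : 0 < h) (hε : 0 < ε) (hK : 0 ≤ K)
    (f : ℝ → ℝ) (hf : Monotone f)
    (hyp : Filter.limsup (fun t : ℝ => Real.exp (-h * t) * (f (t + ε) - f (t - ε))) atTop
        ≤ 2 * ε * K) :
    Filter.limsup (fun t : ℝ => h * Real.exp (-h * t) * f t) atTop
        ≤ Real.exp (4 * h * ε) * K := by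
  by_cases hW : IsBoundedUnder (· ≤ ·) atTop (fun t => exp (-h * t) * (f (t + ε) - f (t - ε)))
  · have hle : limsup (fun t => h * exp (-h * t) * f t) atTop ≤ K := by
      refine le_of_forall_gt_imp_ge_of_dense fun K' hK' => ?_
      have hK'0 : 0 ≤ K' := hK.trans hK'.le
      have hwin : ∀ᶠ t in atTop, f (t + ε) - f (t - ε) ≤ 2 * ε * K' * exp (h * t) := by
        have hlt := hyp.trans_lt (mul_lt_mul_of_pos_left hK' (by positivity : 0 < 2 * ε))
        filter_upwards [eventually_lt_of_limsup_lt hlt hW] with t ht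
        rw [neg_mul, exp_neg, inv_mul_lt_iff₀ (exp_pos _), mul_comm] at ht
        exact ht.le
      simpa [hε.ne'] using hf.limsup_le_of_window_le hh hε (by positivity) hwin
    exact hle.trans (le_mul_of_one_le_left hK (one_le_exp (by positivity)))
  · -- `hyp` is void here (the junk value of `limsup` is `0`), but the conclusion is too.
    rw [Real.limsup_of_not_isBoundedUnder fun hg =>
      hW (hf.isBoundedUnder_le_window_of_isBoundedUnder_le hh hg)]
    positivity
end

section
/- Let h > 0 and c ∈ ℝ, and let f : [0,∞) → ℝ be nondecreasing. If lim_{t→∞} h e^{−ht} ∫₀ᵗ f(r) dr = c, then lim_{t→∞} f(t) e^{−ht} = c. -/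
/-!
With `W t = h e^{-ht} ∫₀ᵗ f`, monotonicity of `f` gives `(s/h) f t ≤ ∫ₜ^{t+s/h} f` for every real
`s`, that is `s · f t e^{-ht} ≤ e^s W (t + s/h) - W t`. As `t → ∞` the right-hand side divided by
`s` tends to `c (e^s - 1)/s`, an upper bound for `f t e^{-ht}` when `s > 0` and a lower bound when
`s < 0`; both tend to `c` as `s → 0`.
-/

open Filter Real MeasureTheory intervalIntegral Topology

theorem tendsto_of_eventually_squeezed {α ι κ β : Type*} [TopologicalSpace β] [Preorder β]
    [OrderTopology β] {l : Filter α} {p : Filter ι} {q : Filter κ} [p.NeBot] [q.NeBot]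
    {g : α → β} {lo : ι → α → β} {up : κ → α → β} {L : ι → β} {U : κ → β} {c : β}
    (hL : Tendsto L p (𝓝 c)) (hU : Tendsto U q (𝓝 c))
    (hlo : ∀ᶠ i in p, Tendsto (lo i) l (𝓝 (L i)) ∧ ∀ᶠ x in l, lo i x ≤ g x)
    (hup : ∀ᶠ j in q, Tendsto (up j) l (𝓝 (U j)) ∧ ∀ᶠ x in l, g x ≤ up j x) :
    Tendsto g l (𝓝 c) := by
  refine tendsto_order.2 ⟨fun a ha => ?_, fun a ha => ?_⟩
  · obtain ⟨i, hLi, hi, hle⟩ := ((tendsto_order.1 hL).1 a ha).and hlo |>.exists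
    filter_upwards [(tendsto_order.1 hi).1 a hLi, hle] with x hax hx using hax.trans_le hx
  · obtain ⟨j, hUj, hj, hle⟩ := ((tendsto_order.1 hU).2 a ha).and hup |>.exists
    filter_upwards [(tendsto_order.1 hj).2 a hUj, hle] with x hxa hx using hx.trans_lt hxa

theorem MonotoneOn.sub_mul_le_intervalIntegral {f : ℝ → ℝ} {a b : ℝ}
    (hf : MonotoneOn f (Set.uIcc a b)) : (b - a) * f a ≤ ∫ x in a..b, f x := by
  rcases le_total a b with hab | hba
  · have hmono : ∫ _ in a..b, f a ≤ ∫ x in a..b, f x :=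
      integral_mono_on hab intervalIntegrable_const hf.intervalIntegrable fun x hx =>
        hf Set.left_mem_uIcc (Set.Icc_subset_uIcc hx) hx.1
    simpa using hmono
  · have hmono : ∫ x in b..a, f x ≤ ∫ _ in b..a, f a :=
      integral_mono_on hba hf.intervalIntegrable.symm intervalIntegrable_const fun x hx =>
        hf (Set.Icc_subset_uIcc' hx) Set.left_mem_uIcc hx.2
    rw [integral_symm]
    simp only [intervalIntegral.integral_const, smul_eq_mul] at hmono
    linarith

theorem tendsto_slope_exp_zero : Tendsto (slope exp 0) (𝓝[≠] 0) (𝓝 1) := by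
  simpa using (hasDerivAt_iff_tendsto_slope.1 (hasDerivAt_exp 0))

section ExpWeightedIntegral

variable (h : ℝ) (f : ℝ → ℝ)

noncomputable def expWeightedIntegral (t : ℝ) : ℝ := h * exp (-h * t) * ∫ r in (0 : ℝ)..t, f r

variable {h f}

theorem exp_mul_expWeightedIntegral_sub {t u : ℝ} (ht : IntervalIntegrable f volume 0 t)
    (hu : IntervalIntegrable f volume 0 u) :
    exp (h * (u - t)) * expWeightedIntegral h f u - expWeightedIntegral h f t =
      h * exp (-h * t) * ∫ r in t..u, f r := by
  have hexp : exp (h * (u - t)) * exp (-h * u) = exp (-h * t) := by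
    rw [← exp_add]; ring_nf
  rw [← integral_interval_sub_left hu ht, expWeightedIntegral, expWeightedIntegral,
    ← hexp]
  ring

theorem mul_le_exp_mul_expWeightedIntegral_sub (hh : 0 < h) (hf : MonotoneOn f (Set.Ici 0))
    {t s : ℝ} (ht : 0 ≤ t) (hts : 0 ≤ t + s / h) :
    s * (f t * exp (-h * t)) ≤
      exp s * expWeightedIntegral h f (t + s / h) - expWeightedIntegral h f t := by
  have hmono : ∀ {a b}, 0 ≤ a → 0 ≤ b → MonotoneOn f (Set.uIcc a b) := fun ha hb =>
    hf.mono fun x hx => (le_min ha hb).trans hx.1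
  have hincr := exp_mul_expWeightedIntegral_sub (h := h) (hmono le_rfl ht).intervalIntegrable
    (hmono le_rfl hts).intervalIntegrable
  rw [add_sub_cancel_left, mul_div_cancel₀ s hh.ne'] at hincr
  rw [hincr]
  calc s * (f t * exp (-h * t)) = h * exp (-h * t) * ((t + s / h - t) * f t) := by
        field_simp; ring
    _ ≤ _ := mul_le_mul_of_nonneg_left (hmono ht hts).sub_mul_le_intervalIntegral
        (by positivity)

end ExpWeightedIntegral

/-- Tauberian direction: if `f` is nondecreasing on `[0, ∞)` and
`h e^{-h t} ∫₀ᵗ f → c` as `t → ∞`, then `f t · e^{-h t} → c` as `t → ∞`. -/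
theorem tauberian_sphere_volume_asymptotics
    (h c : ℝ) (hh : 0 < h) (f : ℝ → ℝ)
    (hf : MonotoneOn f (Set.Ici (0:ℝ)))
    (hlim : Tendsto (fun t : ℝ => h * Real.exp (-h * t) * ∫ r in (0:ℝ)..t, f r)
      atTop (nhds c)) :
    Tendsto (fun t : ℝ => f t * Real.exp (-h * t)) atTop (nhds c) := by
  have hW : Tendsto (expWeightedIntegral h f) atTop (𝓝 c) := hlim
  set D : ℝ → ℝ → ℝ := fun s t =>
    (exp s * expWeightedIntegral h f (t + s / h) - expWeightedIntegral h f t) / s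
  have hD (s : ℝ) : Tendsto (D s) atTop (𝓝 ((exp s * c - c) / s)) :=
    (((hW.comp (tendsto_atTop_add_const_right _ _ tendsto_id)).const_mul _).sub hW).div_const _
  have hL : Tendsto (fun s : ℝ => (exp s * c - c) / s) (𝓝[≠] 0) (𝓝 c) := by
    simpa [slope, div_eq_inv_mul, mul_comm, mul_sub, mul_left_comm] using
      tendsto_slope_exp_zero.const_mul c
  refine tendsto_of_eventually_squeezed (lo := D) (up := D)
    (hL.mono_left (nhdsLT_le_nhdsNE 0)) (hL.mono_left (nhdsGT_le_nhdsNE 0)) ?_ ?_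
  · filter_upwards [self_mem_nhdsWithin] with s (hs : s < 0)
    refine ⟨hD s, ?_⟩
    filter_upwards [eventually_ge_atTop (-(s / h))] with t ht
    have hsh : s / h < 0 := div_neg_of_neg_of_pos hs hh
    rw [div_le_iff_of_neg' hs]
    exact mul_le_exp_mul_expWeightedIntegral_sub hh hf (by linarith) (by linarith)
  · filter_upwards [self_mem_nhdsWithin] with s (hs : 0 < s)
    refine ⟨hD s, ?_⟩
    filter_upwards [eventually_ge_atTop 0] with t ht
    rw [le_div_iff₀' hs]
    exact mul_le_exp_mul_expWeightedIntegral_sub hh hf ht (by positivity)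
end
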